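/- In the base-4 numeration system, SP_t(3k+2) has representation (12)^k 2 for all k ≥ 0, SP_t(3k) has representation 1(12)^{k−1}2 for all k ≥ 1, and SP_t(3k+1) has representation 2(12)^{k−1}2 for all k ≥ 1; equivalently, 5·SP_t(3k+2) = 8·16^k + 2 for all k ≥ 0, and 5·SP_t(3k) = 28·16^{k−1} + 2 and 5·SP_t(3k+1) = 48·16^{k−1} + 2 for all k ≥ 1. -/
import Mathlib

/-- The Thue–Morse word: `tm n` is the number of ones (sum of binary digits)
in the binary expansion of `n`, taken mod 2. -/
def tm (n : ℕ) : ℕ := (Nat.digits 2 n).sum % 2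

/-- `ps` is a factorization of the finite word `w` into nonempty palindromes. -/
def IsPalDecomp (w : List ℕ) (ps : List (List ℕ)) : Prop :=
  ps.flatten = w ∧ ∀ p ∈ ps, p ≠ [] ∧ p.Palindrome

/-- The palindromic length of a finite word: the least number of nonempty
palindromes whose concatenation is the word (0 for the empty word). -/
noncomputable def palLen (w : List ℕ) : ℕ :=
  sInf {k | ∃ ps, ps.length = k ∧ IsPalDecomp w ps}

/-- `pplTM n` is the palindromic length of the prefix of length `n`
of the Thue–Morse word. -/
noncomputable def pplTM (n : ℕ) : ℕ := palLen ((List.range n).map tm)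

/-- `spTM k` is the length of the shortest prefix of the Thue–Morse word of
palindromic length `k`. -/
noncomputable def spTM (k : ℕ) : ℕ := sInf {n | pplTM n = k}

set_option maxHeartbeats 2000000

lemma tm_le (n : ℕ) : tm n ≤ 1 := by
  have := Nat.mod_lt ((Nat.digits 2 n).sum) (show 0 < 2 by norm_num)
  unfold tm; omega

lemma tm_zero : tm 0 = 0 := by unfold tm; simp

lemma tm_two (n : ℕ) : tm (2 * n) = tm n := by
  rcases Nat.eq_zero_or_pos n with h | h
  · subst h; simp
  · unfold tm
    rw [Nat.digits_def' (by norm_num : 1 < 2) (by omega)]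
    simp [Nat.mul_div_cancel_left, Nat.mul_mod_right]

lemma tm_two_add_one (n : ℕ) : tm (2 * n + 1) = 1 - tm n := by
  unfold tm
  rw [Nat.digits_def' (by norm_num : 1 < 2) (by omega)]
  have h1 : (2 * n + 1) % 2 = 1 := by omega
  have h2 : (2 * n + 1) / 2 = n := by omega
  rw [h1, h2, List.sum_cons]
  have := Nat.mod_lt ((Nat.digits 2 n).sum) (show 0 < 2 by norm_num)
  omega

lemma tm_ne (n : ℕ) : tm (2 * n) ≠ tm (2 * n + 1) := by
  have h1 := tm_two n
  have h2 := tm_two_add_one n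
  have h3 := tm_le n
  omega

def Pal (i j : ℕ) : Prop := ∀ k, i ≤ k → k < j → tm k = tm (i + j - 1 - k)
def APal (i j : ℕ) : Prop := ∀ k, i ≤ k → k < j → tm k ≠ tm (i + j - 1 - k)

lemma pal_ee {x y : ℕ} : Pal (2*x) (2*y) ↔ APal x y := by
  constructor
  · intro h k hk1 hk2
    have h1 := h (2*k) (by omega) (by omega)
    have e : 2*x + 2*y - 1 - 2*k = 2*(x+y-1-k)+1 := by omega
    rw [e, tm_two, tm_two_add_one] at h1
    have := tm_le k; have := tm_le (x+y-1-k)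
    omega
  · intro h k hk1 hk2
    rcases Nat.even_or_odd k with ⟨m, hm⟩ | ⟨m, hm⟩
    · have hk : k = 2*m := by omega
      subst hk
      have h1 := h m (by omega) (by omega)
      have e : 2*x + 2*y - 1 - 2*m = 2*(x+y-1-m)+1 := by omega
      rw [e, tm_two, tm_two_add_one]
      have := tm_le m; have := tm_le (x+y-1-m)
      omega
    · subst hm
      have h1 := h m (by omega) (by omega)
      have e : 2*x + 2*y - 1 - (2*m+1) = 2*(x+y-1-m) := by omega
      rw [e, tm_two, tm_two_add_one]
      have := tm_le m; have := tm_le (x+y-1-m)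
      omega

lemma apal_ee {x y : ℕ} : APal (2*x) (2*y) ↔ Pal x y := by
  constructor
  · intro h k hk1 hk2
    have h1 := h (2*k) (by omega) (by omega)
    have e : 2*x + 2*y - 1 - 2*k = 2*(x+y-1-k)+1 := by omega
    rw [e, tm_two, tm_two_add_one] at h1
    have := tm_le k; have := tm_le (x+y-1-k)
    omega
  · intro h k hk1 hk2
    rcases Nat.even_or_odd k with ⟨m, hm⟩ | ⟨m, hm⟩
    · have hk : k = 2*m := by omega
      subst hk
      have h1 := h m (by omega) (by omega)
      have e : 2*x + 2*y - 1 - 2*m = 2*(x+y-1-m)+1 := by omega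
      rw [e, tm_two, tm_two_add_one]
      have := tm_le m; have := tm_le (x+y-1-m)
      omega
    · subst hm
      have h1 := h m (by omega) (by omega)
      have e : 2*x + 2*y - 1 - (2*m+1) = 2*(x+y-1-m) := by omega
      rw [e, tm_two, tm_two_add_one]
      have := tm_le m; have := tm_le (x+y-1-m)
      omega

lemma pal_oo_mp {x y : ℕ} (hxy : x < y) (h : Pal (2*x+1) (2*y+1)) : APal x (y+1) := by
  intro k hk1 hk2
  rcases Nat.lt_or_ge k y with hk | hk
  · have h1 := h (2*k+1) (by omega) (by omega)
    have e : (2*x+1) + (2*y+1) - 1 - (2*k+1) = 2*(x+y-k) := by omega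
    rw [e, tm_two, tm_two_add_one] at h1
    have e2 : x + (y+1) - 1 - k = x + y - k := by omega
    rw [e2]
    have := tm_le k; have := tm_le (x+y-k)
    omega
  · have hky : k = y := by omega
    rw [hky]
    have h1 := h (2*y) (by omega) (by omega)
    have e : (2*x+1) + (2*y+1) - 1 - (2*y) = 2*x+1 := by omega
    rw [e, tm_two, tm_two_add_one] at h1
    have e2 : x + (y+1) - 1 - y = x := by omega
    rw [e2]
    have := tm_le x; have := tm_le y
    omega

lemma pal_oo_mpr {x y : ℕ} (h : APal x (y+1)) : Pal (2*x+1) (2*y+1) := by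
  intro k hk1 hk2
  rcases Nat.even_or_odd k with ⟨m, hm⟩ | ⟨m, hm⟩
  · have hk : k = 2*m := by omega
    subst hk
    have h1 := h m (by omega) (by omega)
    have e : (2*x+1) + (2*y+1) - 1 - (2*m) = 2*(x+y-m)+1 := by omega
    rw [e, tm_two, tm_two_add_one]
    have e2 : x + (y+1) - 1 - m = x + y - m := by omega
    rw [e2] at h1
    have := tm_le m; have := tm_le (x+y-m)
    omega
  · subst hm
    have h1 := h m (by omega) (by omega)
    have e : (2*x+1) + (2*y+1) - 1 - (2*m+1) = 2*(x+y-m) := by omega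
    rw [e, tm_two, tm_two_add_one]
    have e2 : x + (y+1) - 1 - m = x + y - m := by omega
    rw [e2] at h1
    have := tm_le m; have := tm_le (x+y-m)
    omega

lemma apal_oo_mp {x y : ℕ} (h : APal (2*x+1) (2*y+1)) : Pal x (y+1) := by
  intro k hk1 hk2
  have e2 : x + (y+1) - 1 - k = x + y - k := by omega
  rw [e2]
  rcases Nat.lt_or_ge k y with hk | hk
  · have h1 := h (2*k+1) (by omega) (by omega)
    have e : (2*x+1) + (2*y+1) - 1 - (2*k+1) = 2*(x+y-k) := by omega
    rw [e, tm_two, tm_two_add_one] at h1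
    have := tm_le k; have := tm_le (x+y-k)
    omega
  · have hky : k = y := by omega
    rw [hky]
    rcases Nat.lt_or_ge x y with hx | hx
    · have h1 := h (2*y) (by omega) (by omega)
      have e : (2*x+1) + (2*y+1) - 1 - (2*y) = 2*x+1 := by omega
      rw [e, tm_two, tm_two_add_one] at h1
      have e3 : x + y - y = x := by omega
      rw [e3]
      have := tm_le x; have := tm_le y
      omega
    · have hxy : x = y := by omega
      have e3 : x + y - y = y := by omega
      rw [e3]

lemma apal_oo_mpr {x y : ℕ} (h : Pal x (y+1)) : APal (2*x+1) (2*y+1) := by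
  intro k hk1 hk2
  rcases Nat.even_or_odd k with ⟨m, hm⟩ | ⟨m, hm⟩
  · have hk : k = 2*m := by omega
    subst hk
    have h1 := h m (by omega) (by omega)
    have e : (2*x+1) + (2*y+1) - 1 - (2*m) = 2*(x+y-m)+1 := by omega
    rw [e, tm_two, tm_two_add_one]
    have e2 : x + (y+1) - 1 - m = x + y - m := by omega
    rw [e2] at h1
    have := tm_le m; have := tm_le (x+y-m)
    omega
  · subst hm
    have h1 := h m (by omega) (by omega)
    have e : (2*x+1) + (2*y+1) - 1 - (2*m+1) = 2*(x+y-m) := by omega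
    rw [e, tm_two, tm_two_add_one]
    have e2 : x + (y+1) - 1 - m = x + y - m := by omega
    rw [e2] at h1
    have := tm_le m; have := tm_le (x+y-m)
    omega

lemma apal_odd {i j : ℕ} (hij : i < j) (hodd : (j - i) % 2 = 1) (h : APal i j) : False := by
  obtain ⟨t, ht⟩ : ∃ t, j = i + 2*t + 1 := ⟨(j-i-1)/2, by omega⟩
  subst ht
  have h1 := h (i+t) (by omega) (by omega)
  have e : i + (i + 2*t + 1) - 1 - (i+t) = i + t := by omega
  rw [e] at h1
  exact h1 rfl

lemma no_three {n : ℕ} (h1 : tm n = tm (n+1)) (h2 : tm (n+1) = tm (n+2)) : False := by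
  rcases Nat.even_or_odd n with ⟨u, hu⟩ | ⟨u, hu⟩
  · have hn : n = 2*u := by omega
    rw [hn] at h1
    exact tm_ne u h1
  · have hn1 : n + 1 = 2*(u+1) := by omega
    have hn2 : n + 2 = 2*(u+1) + 1 := by omega
    rw [hn1, hn2] at h2
    exact tm_ne (u+1) h2

lemma pal_eo {x y : ℕ} (h : Pal (2*x) (2*y+1)) (hxy : x < y) :
    y = x + 1 ∧ tm x = tm (x+1) := by
  have E : ∀ m, x ≤ m → m ≤ y → tm m = tm (x + y - m) := by
    intro m h1 h2
    have := h (2*m) (by omega) (by omega)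
    have e : 2*x + (2*y+1) - 1 - 2*m = 2*(x+y-m) := by omega
    rw [e, tm_two, tm_two] at this
    exact this
  have O : ∀ m, x ≤ m → m < y → tm m = tm (x + y - 1 - m) := by
    intro m h1 h2
    have := h (2*m+1) (by omega) (by omega)
    have e : 2*x + (2*y+1) - 1 - (2*m+1) = 2*(x+y-1-m)+1 := by omega
    rw [e, tm_two_add_one, tm_two_add_one] at this
    have := tm_le m; have := tm_le (x+y-1-m)
    omega
  have h1 : tm x = tm (x+1) := by
    have e1 := E (y-1) (by omega) (by omega)
    have e2 := O (y-1) (by omega) (by omega)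
    have g1 : x + y - (y-1) = x + 1 := by omega
    have g2 : x + y - 1 - (y-1) = x := by omega
    rw [g1] at e1; rw [g2] at e2
    omega
  refine ⟨?_, h1⟩
  by_contra hne
  have hy2 : x + 2 ≤ y := by omega
  have e1 := E (y-2) (by omega) (by omega)
  have e2 := O (y-2) (by omega) (by omega)
  have g1 : x + y - (y-2) = x + 2 := by omega
  have g2 : x + y - 1 - (y-2) = x + 1 := by omega
  rw [g1] at e1; rw [g2] at e2
  exact no_three h1 (by omega)

lemma pal_oe {x y : ℕ} (h : Pal (2*x+1) (2*y)) (hxy : x + 1 < y) :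
    y = x + 2 ∧ tm x = tm (x+1) := by
  have O : ∀ m, x ≤ m → m < y → tm m = tm (x + y - 1 - m) := by
    intro m h1 h2
    have := h (2*m+1) (by omega) (by omega)
    have e : (2*x+1) + 2*y - 1 - (2*m+1) = 2*(x+y-1-m)+1 := by omega
    rw [e, tm_two_add_one, tm_two_add_one] at this
    have := tm_le m; have := tm_le (x+y-1-m)
    omega
  have E : ∀ m, x + 1 ≤ m → m < y → tm m = tm (x + y - m) := by
    intro m h1 h2
    have := h (2*m) (by omega) (by omega)
    have e : (2*x+1) + 2*y - 1 - 2*m = 2*(x+y-m) := by omega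
    rw [e, tm_two, tm_two] at this
    exact this
  have h1 : tm x = tm (x+1) := by
    have e1 := E (y-1) (by omega) (by omega)
    have e2 := O (y-1) (by omega) (by omega)
    have g1 : x + y - (y-1) = x + 1 := by omega
    have g2 : x + y - 1 - (y-1) = x := by omega
    rw [g1] at e1; rw [g2] at e2
    omega
  refine ⟨?_, h1⟩
  by_contra hne
  have hy2 : x + 3 ≤ y := by omega
  have e1 := E (y-2) (by omega) (by omega)
  have e2 := O (y-2) (by omega) (by omega)
  have g1 : x + y - (y-2) = x + 2 := by omega
  have g2 : x + y - 1 - (y-2) = x + 1 := by omega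
  rw [g1] at e1; rw [g2] at e2
  exact no_three h1 (by omega)

def word (n : ℕ) : List ℕ := (List.range n).map tm
def seg (a b : ℕ) : List ℕ := (List.range' a (b - a)).map tm

lemma pplTM_eq_word (n : ℕ) : pplTM n = palLen (word n) := rfl

lemma word_length (n : ℕ) : (word n).length = n := by simp [word]

lemma seg_length (a b : ℕ) : (seg a b).length = b - a := by simp [seg]

lemma word_append {a n : ℕ} (h : a ≤ n) : word n = word a ++ seg a n := by
  unfold word seg
  rw [← List.map_append]
  congr 1
  have h2 : n = a + (n - a) := by omega
  conv_lhs => rw [h2]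
  rw [List.range_add]
  congr 1
  rw [List.range'_eq_map_range]

lemma seg_get {a n i : ℕ} (h : i < n - a) :
    (seg a n)[i]'(by rw [seg_length]; exact h) = tm (a + i) := by
  simp [seg]

lemma seg_pal_iff {a n : ℕ} (han : a ≤ n) : (seg a n).Palindrome ↔ Pal a n := by
  rw [List.Palindrome.iff_reverse_eq]
  have hlen : (seg a n).length = n - a := seg_length a n
  constructor
  · intro hrev k hk1 hk2
    have hi : k - a < n - a := by omega
    have h1 : (seg a n).reverse[k-a]'(by rw [List.length_reverse, hlen]; exact hi)
        = (seg a n)[k-a]'(by rw [hlen]; exact hi) := by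
      simp only [hrev]
    rw [List.getElem_reverse] at h1
    have e1 := seg_get (a:=a) (n:=n) hi
    have e2 := seg_get (a:=a) (n:=n) (i := (seg a n).length - 1 - (k - a)) (by rw [hlen]; omega)
    rw [e1, e2] at h1
    have g : a + ((seg a n).length - 1 - (k - a)) = a + n - 1 - k := by rw [hlen]; omega
    have g2 : a + (k - a) = k := by omega
    rw [g, g2] at h1
    exact h1.symm
  · intro hp
    apply List.ext_getElem (by simp)
    intro i h1 h2
    rw [List.getElem_reverse]
    have hi : i < n - a := by rwa [hlen] at h2
    have e1 := seg_get (a:=a) (n:=n) (i := (seg a n).length - 1 - i) (by rw [hlen]; omega)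
    have e2 := seg_get (a:=a) (n:=n) (i := i) hi
    rw [e1, e2]
    have hk := hp (a + (n - a - 1 - i)) (by omega) (by omega)
    have g : a + n - 1 - (a + (n - a - 1 - i)) = a + i := by omega
    rw [g] at hk
    have g2 : a + ((seg a n).length - 1 - i) = a + (n - a - 1 - i) := by rw [hlen]
    rw [g2]
    exact hk

lemma palLen_nonempty (w : List ℕ) :
    {k | ∃ ps, ps.length = k ∧ IsPalDecomp w ps}.Nonempty := by
  refine ⟨(w.map fun a => [a]).length, w.map fun a => [a], rfl, ?_, ?_⟩
  · induction w with
    | nil => rfl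
    | cons a l ih => simp only [List.map_cons, List.flatten_cons, ih, List.singleton_append]
  · intro p hp
    simp only [List.mem_map] at hp
    obtain ⟨x, _, rfl⟩ := hp
    exact ⟨by simp, List.Palindrome.singleton x⟩

lemma palLen_mem (w : List ℕ) :
    ∃ ps : List (List ℕ), ps.length = palLen w ∧ IsPalDecomp w ps := by
  have := Nat.sInf_mem (palLen_nonempty w)
  exact this

lemma palLen_le {w : List ℕ} {ps : List (List ℕ)} (h : IsPalDecomp w ps) :
    palLen w ≤ ps.length :=
  Nat.sInf_le ⟨ps, rfl, h⟩

lemma pplTM_zero : pplTM 0 = 0 := by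
  rw [pplTM_eq_word]
  have : palLen (word 0) ≤ ([] : List (List ℕ)).length := palLen_le ⟨rfl, by simp⟩
  simpa using this

lemma dp_up {a n : ℕ} (h1 : a < n) (h2 : Pal a n) : pplTM n ≤ pplTM a + 1 := by
  rw [pplTM_eq_word, pplTM_eq_word]
  obtain ⟨ps, hlen, hflat, hmem⟩ := palLen_mem (word a)
  have : IsPalDecomp (word n) (ps ++ [seg a n]) := by
    refine ⟨?_, ?_⟩
    · rw [List.flatten_append, hflat]
      simp [word_append (le_of_lt h1)]
    · intro p hp
      rw [List.mem_append] at hp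
      rcases hp with hp | hp
      · exact hmem p hp
      · simp only [List.mem_singleton] at hp
        subst hp
        constructor
        · have : (seg a n).length = n - a := seg_length a n
          intro hnil
          rw [hnil] at this
          simp at this
          omega
        · exact (seg_pal_iff (le_of_lt h1)).mpr h2
  calc palLen (word n) ≤ (ps ++ [seg a n]).length := palLen_le this
    _ = palLen (word a) + 1 := by simp [hlen]

lemma dp_ex {n : ℕ} (hn : 1 ≤ n) : ∃ a, a < n ∧ Pal a n ∧ pplTM n = pplTM a + 1 := by
  obtain ⟨ps, hlen, hflat, hmem⟩ := palLen_mem (word n)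
  have hne : ps ≠ [] := by
    intro h
    rw [h] at hflat
    have := word_length n
    rw [← hflat] at this
    simp at this
    omega
  obtain ⟨qs, q, rfl⟩ : ∃ qs q, ps = qs ++ [q] := by
    rcases hr : ps.reverse with _ | ⟨q, qs'⟩
    · exfalso; apply hne; simpa using congrArg List.reverse hr
    · exact ⟨qs'.reverse, q, by simpa using congrArg List.reverse hr⟩
  have hqpal : q ≠ [] ∧ q.Palindrome := hmem q (by simp)
  rw [List.flatten_append] at hflat
  simp only [List.flatten_cons, List.flatten_nil, List.append_nil] at hflat
  have hql : q.length ≤ n := by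
    have := congrArg List.length hflat
    rw [List.length_append, word_length] at this
    omega
  set a := n - q.length with ha
  have han : a < n := by
    have : q.length ≥ 1 := by
      cases q with
      | nil => exact absurd rfl hqpal.1
      | cons _ _ => simp
    omega
  have hsplit : word n = word a ++ seg a n := word_append (le_of_lt han)
  have hflen : qs.flatten.length = (word a).length := by
    have := congrArg List.length hflat
    rw [List.length_append, word_length] at this
    rw [word_length]
    omega
  have heq : qs.flatten = word a ∧ q = seg a n := by
    have h2 : qs.flatten ++ q = word a ++ seg a n := by rw [hflat, ← hsplit]
    exact List.append_inj h2 hflen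
  refine ⟨a, han, (seg_pal_iff (le_of_lt han)).mp (heq.2 ▸ hqpal.2), ?_⟩
  have hup : pplTM n ≤ pplTM a + 1 := by
    apply dp_up han
    exact (seg_pal_iff (le_of_lt han)).mp (heq.2 ▸ hqpal.2)
  have hdown : pplTM a ≤ pplTM n - 1 := by
    rw [pplTM_eq_word]
    have : IsPalDecomp (word a) qs := ⟨heq.1, fun p hp => hmem p (by simp [hp])⟩
    have h3 := palLen_le this
    have h4 : (qs ++ [q]).length = palLen (word n) := hlen
    rw [List.length_append] at h4
    simp at h4
    rw [pplTM_eq_word]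
    omega
  have hpos : 1 ≤ pplTM n := by
    rw [pplTM_eq_word, ← hlen]
    rw [List.length_append]
    simp
  omega

def P : ℕ → ℕ
  | n =>
    if h : n = 0 then 0
    else
      have h4 : n / 4 < n := Nat.div_lt_self (Nat.pos_of_ne_zero h) (by norm_num)
      match h2 : n % 4 with
      | 0 => P (n / 4)
      | 1 => P (n / 4) + 1
      | 2 =>
        have : n / 4 + 1 < n := by omega
        min (P (n / 4)) (P (n / 4 + 1)) + 2
      | _ + 3 =>
        have : n / 4 + 1 < n := by omega
        P (n / 4 + 1) + 1
  termination_by n => n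

lemma P_zero : P 0 = 0 := by rw [P]; simp

lemma P_four {b : ℕ} (hb : 1 ≤ b) : P (4 * b) = P b := by
  rw [P]
  have h : ¬ (4 * b = 0) := by omega
  rw [dif_neg h]
  have h1 : 4 * b % 4 = 0 := by omega
  have h2 : 4 * b / 4 = b := by omega
  split
  · show P ((4 * b) / 4) = P b
    rw [h2]
  · exfalso; omega
  · exfalso; omega
  · exfalso; omega

lemma P_four_one (b : ℕ) : P (4 * b + 1) = P b + 1 := by
  rw [P]
  have h : ¬ (4 * b + 1 = 0) := by omega
  rw [dif_neg h]
  have h1 : (4 * b + 1) % 4 = 1 := by omega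
  have h2 : (4 * b + 1) / 4 = b := by omega
  split
  · exfalso; omega
  · show P ((4 * b + 1) / 4) + 1 = P b + 1
    rw [h2]
  · exfalso; omega
  · exfalso; omega

lemma P_four_two (b : ℕ) : P (4 * b + 2) = min (P b) (P (b + 1)) + 2 := by
  rw [P]
  have h : ¬ (4 * b + 2 = 0) := by omega
  rw [dif_neg h]
  have h1 : (4 * b + 2) % 4 = 2 := by omega
  have h2 : (4 * b + 2) / 4 = b := by omega
  split
  · exfalso; omega
  · exfalso; omega
  · show min (P ((4 * b + 2) / 4)) (P ((4 * b + 2) / 4 + 1)) + 2 = min (P b) (P (b + 1)) + 2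
    rw [h2]
  · exfalso; omega

lemma P_four_three (b : ℕ) : P (4 * b + 3) = P (b + 1) + 1 := by
  rw [P]
  have h : ¬ (4 * b + 3 = 0) := by omega
  rw [dif_neg h]
  have h1 : (4 * b + 3) % 4 = 3 := by omega
  have h2 : (4 * b + 3) / 4 = b := by omega
  split
  · exfalso; omega
  · exfalso; omega
  · exfalso; omega
  · show P ((4 * b + 3) / 4 + 1) + 1 = P (b + 1) + 1
    rw [h2]

lemma P_one : P 1 = 1 := by
  have := P_four_one 0
  simpa [P_zero] using this

lemma P_two : P 2 = 2 := by
  have := P_four_two 0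
  simpa [P_zero, P_one] using this

lemma P_three : P 3 = 2 := by
  have := P_four_three 0
  simpa [P_one] using this

lemma P_eq_zero {n : ℕ} (h : P n = 0) : n = 0 := by
  induction n using Nat.strong_induction_on with
  | _ n ih =>
    rcases Nat.eq_zero_or_pos n with h0 | h0
    · exact h0
    obtain ⟨b, r, hr, hn⟩ : ∃ b r, r < 4 ∧ n = 4 * b + r := ⟨n / 4, n % 4, by omega, by omega⟩
    interval_cases r
    · simp only [Nat.add_zero] at hn
      rw [hn] at h ⊢
      have hb : 1 ≤ b := by omega
      rw [P_four hb] at h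
      have := ih b (by omega) h
      omega
    · rw [hn, P_four_one] at h; omega
    · rw [hn, P_four_two] at h; omega
    · rw [hn, P_four_three] at h; omega

lemma P_lip_up (m : ℕ) : P (m + 1) ≤ P m + 1 := by
  induction m using Nat.strong_induction_on with
  | _ m ih =>
    obtain ⟨b, r, hr, hn⟩ : ∃ b r, r < 4 ∧ m = 4 * b + r := ⟨m / 4, m % 4, by omega, by omega⟩
    interval_cases r
    · -- m = 4b, m+1 = 4b+1
      simp only [Nat.add_zero] at hn
      rcases Nat.eq_zero_or_pos b with hb | hb
      · subst hb; simp at hn; subst hn; simp [P_zero, P_one]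
      rw [hn, P_four hb, P_four_one]
    · rw [hn, show 4*b+1+1 = 4*b+2 by omega, P_four_two, P_four_one]
      have := min_le_left (P b) (P (b+1))
      omega
    · rw [hn, show 4*b+2+1 = 4*b+3 by omega, P_four_three, P_four_two]
      have h1 : P (b+1) ≤ P b + 1 := by
        rcases Nat.eq_zero_or_pos b with hb | hb
        · subst hb; simp [P_zero, P_one]
        · exact ih b (by omega)
      omega
    · rw [hn, show 4*b+3+1 = 4*(b+1) by omega, P_four_three, P_four (by omega)]
      omega

lemma P_lip_down (m : ℕ) : P m ≤ P (m + 1) + 1 := by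
  induction m using Nat.strong_induction_on with
  | _ m ih =>
    obtain ⟨b, r, hr, hn⟩ : ∃ b r, r < 4 ∧ m = 4 * b + r := ⟨m / 4, m % 4, by omega, by omega⟩
    interval_cases r
    · simp only [Nat.add_zero] at hn
      rcases Nat.eq_zero_or_pos b with hb | hb
      · subst hb; simp at hn; subst hn; simp [P_zero]
      rw [hn, P_four hb, P_four_one]
      omega
    · rw [hn, show 4*b+1+1 = 4*b+2 by omega, P_four_two, P_four_one]
      have h1 : P b ≤ P (b+1) + 1 := by
        rcases Nat.eq_zero_or_pos b with hb | hb
        · subst hb; simp [P_zero]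
        · exact ih b (by omega)
      omega
    · rw [hn, show 4*b+2+1 = 4*b+3 by omega, P_four_three, P_four_two]
      have := min_le_right (P b) (P (b+1))
      omega
    · rw [hn, show 4*b+3+1 = 4*(b+1) by omega, P_four_three, P_four (by omega)]

-- ===== section 5 =====
lemma P_four' (c : ℕ) : P (4 * c) = P c := by
  rcases Nat.eq_zero_or_pos c with h | h
  · subst h; norm_num
  · exact P_four h

lemma pal_single (a : ℕ) : Pal a (a + 1) := by
  intro k hk1 hk2
  have hk : k = a := by omega
  have e : a + (a + 1) - 1 - k = k := by omega
  rw [e]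

lemma pal_strip {c b : ℕ} (h : Pal c (b + 1)) (hcb : c + 1 ≤ b) : Pal (c + 1) b := by
  intro k hk1 hk2
  have := h k (by omega) (by omega)
  have e : (c + 1) + b - 1 - k = c + (b + 1) - 1 - k := by omega
  rw [e]
  exact this

lemma tm_one : tm 1 = 1 := by
  have := tm_two_add_one 0
  simpa [tm_zero] using this

lemma tm_01 : tm 0 ≠ tm 1 := by rw [tm_zero, tm_one]; omega

lemma tm_12 : tm 1 = tm 2 := by
  have := tm_two 1
  rw [this, tm_one]

lemma fam_a_iff {c b : ℕ} : Pal (4 * c) (4 * b) ↔ Pal c b := by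
  have e1 : 4 * c = 2 * (2 * c) := by ring
  have e2 : 4 * b = 2 * (2 * b) := by ring
  rw [e1, e2, pal_ee, apal_ee]

lemma fam_b_iff {c b : ℕ} : Pal (4 * c + 2) (4 * b + 2) ↔ Pal c (b + 1) := by
  have e1 : 4 * c + 2 = 2 * (2 * c + 1) := by ring
  have e2 : 4 * b + 2 = 2 * (2 * b + 1) := by ring
  rw [e1, e2, pal_ee]
  exact ⟨apal_oo_mp, apal_oo_mpr⟩

lemma fam_c_mp {c b : ℕ} (hcb : c ≤ b) (h : Pal (4 * c + 1) (4 * b + 3)) : Pal c (b + 1) := by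
  have e1 : 4 * c + 1 = 2 * (2 * c) + 1 := by ring
  have e2 : 4 * b + 3 = 2 * (2 * b + 1) + 1 := by ring
  rw [e1, e2] at h
  have h2 := pal_oo_mp (by omega) h
  have e3 : 2 * b + 1 + 1 = 2 * (b + 1) := by ring
  rw [e3] at h2
  have e4 : 2 * c = 2 * c := rfl
  exact apal_ee.mp h2

lemma fam_c_mpr {c b : ℕ} (h : Pal c (b + 1)) : Pal (4 * c + 1) (4 * b + 3) := by
  have e1 : 4 * c + 1 = 2 * (2 * c) + 1 := by ring
  have e2 : 4 * b + 3 = 2 * (2 * b + 1) + 1 := by ring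
  rw [e1, e2]
  apply pal_oo_mpr
  have e3 : 2 * b + 1 + 1 = 2 * (b + 1) := by ring
  rw [e3]
  exact apal_ee.mpr h

lemma fam_d_mp {c b : ℕ} (hcb : c < b) (h : Pal (4 * c + 3) (4 * b + 1)) : Pal c (b + 1) := by
  have e1 : 4 * c + 3 = 2 * (2 * c + 1) + 1 := by ring
  have e2 : 4 * b + 1 = 2 * (2 * b) + 1 := by ring
  rw [e1, e2] at h
  have h2 := pal_oo_mp (by omega) h
  have e3 : 2 * b - 1 + 1 = 2 * b := by omega
  exact apal_oo_mp (by rwa [show (2*b) + 1 = (2 * b - 1 + 1) + 1 by omega, e3] at h2)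

lemma pplTM_pos {n : ℕ} (h : 1 ≤ n) : 1 ≤ pplTM n := by
  obtain ⟨a, _, _, he⟩ := dp_ex h
  omega

lemma pplTM_one : pplTM 1 = 1 := by
  have h1 : pplTM 1 ≤ pplTM 0 + 1 := dp_up (by omega) (pal_single 0)
  have h2 := pplTM_pos (le_refl 1)
  rw [pplTM_zero] at h1
  omega

lemma pal_02_false (h : Pal 0 2) : False := by
  have := h 0 (by omega) (by omega)
  simp at this
  exact tm_01 this

lemma pplTM_two : pplTM 2 = 2 := by
  have h1 : pplTM 2 ≤ pplTM 1 + 1 := dp_up (by omega) (pal_single 1)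
  rw [pplTM_one] at h1
  obtain ⟨a, ha, hpal, heq⟩ := dp_ex (show 1 ≤ 2 by omega)
  interval_cases a
  · exact absurd hpal pal_02_false
  · rw [pplTM_one] at heq; omega

lemma pal_13 : Pal 1 3 := by
  intro k hk1 hk2
  interval_cases k
  · have e : 1 + 3 - 1 - 1 = 2 := by omega
    rw [e]; exact tm_12
  · have e : 1 + 3 - 1 - 2 = 1 := by omega
    rw [e]; exact tm_12.symm

lemma pal_03_false (h : Pal 0 3) : False := by
  have := h 0 (by omega) (by omega)
  simp at this
  rw [← tm_12] at this
  exact tm_01 this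

lemma pplTM_three : pplTM 3 = 2 := by
  have h1 : pplTM 3 ≤ pplTM 1 + 1 := dp_up (by omega) pal_13
  rw [pplTM_one] at h1
  obtain ⟨a, ha, hpal, heq⟩ := dp_ex (show 1 ≤ 3 by omega)
  interval_cases a
  · exact absurd hpal pal_03_false
  · rw [pplTM_one] at heq; omega
  · rw [pplTM_two] at heq; omega

theorem pplTM_eq_P (n : ℕ) : pplTM n = P n := by
  induction n using Nat.strong_induction_on with
  | _ n ih =>
  rcases Nat.lt_or_ge n 4 with h4 | h4
  · interval_cases n
    · rw [pplTM_zero, P_zero]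
    · rw [pplTM_one, P_one]
    · rw [pplTM_two, P_two]
    · rw [pplTM_three, P_three]
  obtain ⟨b, r, hr4, hn⟩ : ∃ b r, r < 4 ∧ n = 4 * b + r := ⟨n / 4, n % 4, by omega, by omega⟩
  have hb1 : 1 ≤ b := by omega
  have hn1 : 1 ≤ n := by omega
  interval_cases r
  · -- r = 0
    simp only [Nat.add_zero] at hn
    subst hn
    rw [P_four hb1]
    have hle : pplTM (4 * b) ≤ P b := by
      obtain ⟨c, hcb, hpal, heq⟩ := dp_ex hb1
      have h1 : Pal (4 * c) (4 * b) := fam_a_iff.mpr hpal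
      have h2 : pplTM (4 * b) ≤ pplTM (4 * c) + 1 := dp_up (by omega) h1
      have h3 : pplTM (4 * c) = P c := by rw [ih (4 * c) (by omega), P_four']
      have h4 : P b = P c + 1 := by
        rw [← ih b (by omega), ← ih c (by omega)]; exact heq
      omega
    have hge : P b ≤ pplTM (4 * b) := by
      obtain ⟨a, han, hpal, heq⟩ := dp_ex (by omega : 1 ≤ 4 * b)
      obtain ⟨c, q, hq4, ha⟩ : ∃ c q, q < 4 ∧ a = 4 * c + q := ⟨a / 4, a % 4, by omega, by omega⟩
      interval_cases q
      · simp only [Nat.add_zero] at ha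
        subst ha
        have hcb : c < b := by omega
        have hp2 : Pal c b := fam_a_iff.mp hpal
        have h2 : pplTM b ≤ pplTM c + 1 := dp_up hcb hp2
        have h3 : pplTM (4 * c) = P c := by rw [ih (4 * c) (by omega), P_four']
        have h4 : pplTM b = P b := ih b (by omega)
        have h5 : pplTM c = P c := ih c (by omega)
        omega
      · exfalso
        subst ha
        have hcb : c < b := by omega
        have e1 : 4 * c + 1 = 2 * (2 * c) + 1 := by ring
        have e2 : 4 * b = 2 * (2 * b) := by ring
        rw [e1, e2] at hpal
        have hconc := pal_oe hpal (by omega)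
        exact tm_ne c hconc.2
      · exfalso
        subst ha
        have hcb : c < b := by omega
        have e1 : 4 * c + 2 = 2 * (2 * c + 1) := by ring
        have e2 : 4 * b = 2 * (2 * b) := by ring
        rw [e1, e2] at hpal
        exact apal_odd (by omega) (by omega) (pal_ee.mp hpal)
      · subst ha
        have hcb : c < b := by omega
        rcases Nat.lt_or_ge (c + 1) b with hc1 | hc1
        · exfalso
          have e1 : 4 * c + 3 = 2 * (2 * c + 1) + 1 := by ring
          have e2 : 4 * b = 2 * (2 * b) := by ring
          rw [e1, e2] at hpal
          have := pal_oe hpal (by omega)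
          omega
        · have hceq : c = b - 1 := by omega
          subst hceq
          have h2 : pplTM (4 * (b - 1) + 3) = P b + 1 := by
            rw [ih (4 * (b - 1) + 3) (by omega), P_four_three, show b - 1 + 1 = b by omega]
          omega
    omega
  · -- r = 1
    subst hn
    rw [P_four_one]
    have hle : pplTM (4 * b + 1) ≤ P b + 1 := by
      have h2 : pplTM (4 * b + 1) ≤ pplTM (4 * b) + 1 :=
        dp_up (by omega) (pal_single (4 * b))
      have h3 : pplTM (4 * b) = P b := by rw [ih (4 * b) (by omega), P_four']
      omega
    have hge : P b + 1 ≤ pplTM (4 * b + 1) := by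
      obtain ⟨a, han, hpal, heq⟩ := dp_ex (by omega : 1 ≤ 4 * b + 1)
      obtain ⟨c, q, hq4, ha⟩ : ∃ c q, q < 4 ∧ a = 4 * c + q := ⟨a / 4, a % 4, by omega, by omega⟩
      interval_cases q
      · simp only [Nat.add_zero] at ha
        subst ha
        have hcb : c ≤ b := by omega
        rcases Nat.lt_or_ge c b with hc | hc
        · exfalso
          have e1 : 4 * c = 2 * (2 * c) := by ring
          have e2 : 4 * b + 1 = 2 * (2 * b) + 1 := by ring
          rw [e1, e2] at hpal
          have := pal_eo hpal (by omega)
          omega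
        · have hceq : c = b := by omega
          subst hceq
          have h3 : pplTM (4 * c) = P c := by rw [ih (4 * c) (by omega), P_four']
          omega
      · exfalso
        subst ha
        have hcb : c < b := by omega
        have e1 : 4 * c + 1 = 2 * (2 * c) + 1 := by ring
        have e2 : 4 * b + 1 = 2 * (2 * b) + 1 := by ring
        rw [e1, e2] at hpal
        exact apal_odd (by omega) (by omega) (pal_oo_mp (by omega) hpal)
      · subst ha
        have hcb : c < b := by omega
        have e1 : 4 * c + 2 = 2 * (2 * c + 1) := by ring
        have e2 : 4 * b + 1 = 2 * (2 * b) + 1 := by ring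
        rw [e1, e2] at hpal
        have hconc := pal_eo hpal (by omega)
        have hceq : c = b - 1 := by omega
        subst hceq
        have h3 : pplTM (4 * (b - 1) + 2) = min (P (b - 1)) (P b) + 2 := by
          rw [ih (4 * (b - 1) + 2) (by omega), P_four_two, show b - 1 + 1 = b by omega]
        have h5 : P b ≤ P (b - 1) + 1 := by
          have := P_lip_up (b - 1)
          rwa [show b - 1 + 1 = b by omega] at this
        have mc := min_choice (P (b - 1)) (P b)
        have m1 := min_le_left (P (b - 1)) (P b)
        have m2 := min_le_right (P (b - 1)) (P b)
        omega
      · subst ha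
        have hcb : c < b := by omega
        have hp2 : Pal c (b + 1) := fam_d_mp hcb hpal
        have h3 : pplTM (4 * c + 3) = P (c + 1) + 1 := by
          rw [ih (4 * c + 3) (by omega), P_four_three]
        have h6 : P b ≤ P (c + 1) + 1 := by
          rcases Nat.lt_or_ge (c + 1) b with hc1 | hc1
          · have hp3 : Pal (c + 1) b := pal_strip hp2 (by omega)
            have := dp_up hc1 hp3
            rw [ih b (by omega), ih (c + 1) (by omega)] at this
            omega
          · have : c + 1 = b := by omega
            rw [this]
            omega
        omega
    omega
  · -- r = 2
    subst hn
    rw [P_four_two]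
    have hpb : pplTM b = P b := ih b (by omega)
    have hpb1 : pplTM (b + 1) = P (b + 1) := ih (b + 1) (by omega)
    have hle : pplTM (4 * b + 2) ≤ min (P b) (P (b + 1)) + 2 := by
      rcases le_or_gt (P b) (P (b + 1)) with hmin | hmin
      · rw [min_eq_left hmin]
        have h2 : pplTM (4 * b + 2) ≤ pplTM (4 * b + 1) + 1 :=
          dp_up (by omega) (pal_single (4 * b + 1))
        have h3 : pplTM (4 * b + 1) = P b + 1 := by
          rw [ih (4 * b + 1) (by omega), P_four_one]
        omega
      · rw [min_eq_right (le_of_lt hmin)]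
        obtain ⟨c, hc, hpal, heq⟩ := dp_ex (show 1 ≤ b + 1 by omega)
        have hpc : pplTM c = P c := ih c (by omega)
        have h7 : P (b + 1) = P c + 1 := by rw [← hpb1, ← hpc]; exact heq
        have hcb : c < b := by
          rcases Nat.lt_or_ge c b with h | h
          · exact h
          · exfalso
            have : c = b := by omega
            subst this
            have := P_lip_up c
            omega
        have hp4 : Pal (4 * c + 2) (4 * b + 2) := fam_b_iff.mpr hpal
        have h2 : pplTM (4 * b + 2) ≤ pplTM (4 * c + 2) + 1 :=
          dp_up (by omega) hp4
        have h3 : pplTM (4 * c + 2) = min (P c) (P (c + 1)) + 2 := by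
          rw [ih (4 * c + 2) (by omega), P_four_two]
        have m1 := min_le_left (P c) (P (c + 1))
        omega
    have hge : min (P b) (P (b + 1)) + 2 ≤ pplTM (4 * b + 2) := by
      obtain ⟨a, han, hpal, heq⟩ := dp_ex (by omega : 1 ≤ 4 * b + 2)
      obtain ⟨c, q, hq4, ha⟩ : ∃ c q, q < 4 ∧ a = 4 * c + q := ⟨a / 4, a % 4, by omega, by omega⟩
      have m1 := min_le_left (P b) (P (b + 1))
      have m2 := min_le_right (P b) (P (b + 1))
      interval_cases q
      · exfalso
        simp only [Nat.add_zero] at ha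
        subst ha
        have e1 : 4 * c = 2 * (2 * c) := by ring
        have e2 : 4 * b + 2 = 2 * (2 * b + 1) := by ring
        rw [e1, e2] at hpal
        exact apal_odd (by omega) (by omega) (pal_ee.mp hpal)
      · subst ha
        have hcb : c ≤ b := by omega
        rcases Nat.lt_or_ge c b with hc | hc
        · exfalso
          have e1 : 4 * c + 1 = 2 * (2 * c) + 1 := by ring
          have e2 : 4 * b + 2 = 2 * (2 * b + 1) := by ring
          rw [e1, e2] at hpal
          have := pal_oe hpal (by omega)
          omega
        · have hceq : c = b := by omega
          subst hceq
          have h3 : pplTM (4 * c + 1) = P c + 1 := by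
            rw [ih (4 * c + 1) (by omega), P_four_one]
          omega
      · subst ha
        have hcb : c < b := by omega
        have hp2 : Pal c (b + 1) := fam_b_iff.mp hpal
        have h3 : pplTM (4 * c + 2) = min (P c) (P (c + 1)) + 2 := by
          rw [ih (4 * c + 2) (by omega), P_four_two]
        have hA1 : P (b + 1) ≤ P c + 1 := by
          have := dp_up (show c < b + 1 by omega) hp2
          rw [hpb1, ih c (by omega)] at this
          exact this
        have hA2 : P b ≤ P (c + 1) + 1 := by
          rcases Nat.lt_or_ge (c + 1) b with hc1 | hc1
          · have := dp_up hc1 (pal_strip hp2 (by omega))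
            rw [hpb, ih (c + 1) (by omega)] at this
            exact this
          · have : c + 1 = b := by omega
            rw [this]; omega
        have mc2 := min_choice (P c) (P (c + 1))
        have n1 := min_le_left (P c) (P (c + 1))
        have n2 := min_le_right (P c) (P (c + 1))
        omega
      · subst ha
        have hcb : c < b := by omega
        have e1 : 4 * c + 3 = 2 * (2 * c + 1) + 1 := by ring
        have e2 : 4 * b + 2 = 2 * (2 * b + 1) := by ring
        rw [e1, e2] at hpal
        have hconc := pal_oe hpal (by omega)
        have hceq : c = b - 1 := by omega
        subst hceq
        have h3 : pplTM (4 * (b - 1) + 3) = P b + 1 := by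
          rw [ih (4 * (b - 1) + 3) (by omega), P_four_three, show b - 1 + 1 = b by omega]
        omega
    omega
  · -- r = 3
    subst hn
    rw [P_four_three]
    have hpb1 : pplTM (b + 1) = P (b + 1) := ih (b + 1) (by omega)
    have hle : pplTM (4 * b + 3) ≤ P (b + 1) + 1 := by
      obtain ⟨c, hc, hpal, heq⟩ := dp_ex (show 1 ≤ b + 1 by omega)
      have hpc : pplTM c = P c := ih c (by omega)
      have h7 : P (b + 1) = P c + 1 := by rw [← hpb1, ← hpc]; exact heq
      have hp4 : Pal (4 * c + 1) (4 * b + 3) := fam_c_mpr hpal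
      have h2 : pplTM (4 * b + 3) ≤ pplTM (4 * c + 1) + 1 :=
        dp_up (by omega) hp4
      have h3 : pplTM (4 * c + 1) = P c + 1 := by
        rw [ih (4 * c + 1) (by omega), P_four_one]
      omega
    have hge : P (b + 1) + 1 ≤ pplTM (4 * b + 3) := by
      obtain ⟨a, han, hpal, heq⟩ := dp_ex (by omega : 1 ≤ 4 * b + 3)
      obtain ⟨c, q, hq4, ha⟩ : ∃ c q, q < 4 ∧ a = 4 * c + q := ⟨a / 4, a % 4, by omega, by omega⟩
      interval_cases q
      · exfalso
        simp only [Nat.add_zero] at ha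
        subst ha
        have hcb : c ≤ b := by omega
        have e1 : 4 * c = 2 * (2 * c) := by ring
        have e2 : 4 * b + 3 = 2 * (2 * b + 1) + 1 := by ring
        rw [e1, e2] at hpal
        have hconc := pal_eo hpal (by omega)
        have hceq : c = b := by omega
        subst hceq
        exact tm_ne c hconc.2
      · subst ha
        have hcb : c ≤ b := by omega
        have hp2 : Pal c (b + 1) := fam_c_mp hcb hpal
        have h3 : pplTM (4 * c + 1) = P c + 1 := by
          rw [ih (4 * c + 1) (by omega), P_four_one]
        have hA1 : P (b + 1) ≤ P c + 1 := by
          have := dp_up (show c < b + 1 by omega) hp2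
          rw [hpb1, ih c (by omega)] at this
          exact this
        omega
      · subst ha
        have hcb : c ≤ b := by omega
        rcases Nat.lt_or_ge c b with hc | hc
        · exfalso
          have e1 : 4 * c + 2 = 2 * (2 * c + 1) := by ring
          have e2 : 4 * b + 3 = 2 * (2 * b + 1) + 1 := by ring
          rw [e1, e2] at hpal
          have := pal_eo hpal (by omega)
          omega
        · have hceq : c = b := by omega
          subst hceq
          have h3 : pplTM (4 * c + 2) = min (P c) (P (c + 1)) + 2 := by
            rw [ih (4 * c + 2) (by omega), P_four_two]
          have h5 := P_lip_up c
          have mc := min_choice (P c) (P (c + 1))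
          have n1 := min_le_left (P c) (P (c + 1))
          have n2 := min_le_right (P c) (P (c + 1))
          omega
      · exfalso
        subst ha
        have hcb : c < b := by omega
        have e1 : 4 * c + 3 = 2 * (2 * c + 1) + 1 := by ring
        have e2 : 4 * b + 3 = 2 * (2 * b + 1) + 1 := by ring
        rw [e1, e2] at hpal
        exact apal_odd (by omega) (by omega) (pal_oo_mp (by omega) hpal)
    omega

-- ===== section 6 =====
def sS : ℕ → ℕ
  | 0 => 0
  | 1 => 1
  | 2 => 2
  | 3 => 6
  | (K+4) => 16 * sS (K+1) - 6

def fS : ℕ → ℕ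
  | 0 => 0
  | 1 => 1
  | (K+2) => 4 * sS (K+1) - 2

lemma sq_step {K : ℕ} (h : 1 ≤ K) : sS (K + 3) = 16 * sS K - 6 := by
  obtain ⟨j, rfl⟩ : ∃ j, K = j + 1 := ⟨K - 1, by omega⟩
  rfl

lemma fq_step (J : ℕ) : fS (J + 2) = 4 * sS (J + 1) - 2 := rfl

lemma sq_grow : ∀ K, 1 ≤ K → 1 ≤ sS K ∧ sS K ≤ sS (K + 1) ∧ sS (K + 1) + 2 ≤ 4 * sS K := by
  intro K
  induction K using Nat.strong_induction_on with
  | _ K ih =>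
  intro hK
  match K, hK with
  | 1, _ => refine ⟨by norm_num [sS], by norm_num [sS], by norm_num [sS]⟩
  | 2, _ => refine ⟨by norm_num [sS], by norm_num [sS], by norm_num [sS]⟩
  | 3, _ =>
    have h4 : sS 4 = 10 := by norm_num [sS]
    refine ⟨by norm_num [sS], by rw [h4]; norm_num [sS], by rw [h4]; norm_num [sS]⟩
  | (j+4), _ =>
    have e1 : sS (j + 4) = 16 * sS (j + 1) - 6 := by
      have := sq_step (K := j + 1) (by omega)
      rwa [show j + 1 + 3 = j + 4 by omega] at this
    have e2 : sS (j + 4 + 1) = 16 * sS (j + 2) - 6 := by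
      have := sq_step (K := j + 2) (by omega)
      rwa [show j + 2 + 3 = j + 4 + 1 by omega] at this
    obtain ⟨ih1, ih2, ih3⟩ := ih (j + 1) (by omega) (by omega)
    rw [show j + 1 + 1 = j + 2 from rfl] at ih2 ih3
    refine ⟨by omega, by omega, ?_⟩
    rw [e2, e1]
    omega

lemma sq_pos {K : ℕ} (h : 1 ≤ K) : 1 ≤ sS K := (sq_grow K h).1

lemma sS_G1 {K : ℕ} (h : 1 ≤ K) : sS (K + 1) + 2 ≤ 4 * sS K := (sq_grow K h).2.2

lemma fq_id : ∀ J, 1 ≤ J → sS (J + 2) = 4 * fS J + 2 := by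
  intro J hJ
  match J, hJ with
  | 1, _ => norm_num [sS, fS]
  | (j+2), _ =>
    rw [fq_step]
    have e1 : sS (j + 2 + 2) = 16 * sS (j + 1) - 6 := by
      have := sq_step (K := j + 1) (by omega)
      rwa [show j + 1 + 3 = j + 2 + 2 by omega] at this
    have := sq_pos (K := j + 1) (by omega)
    omega

theorem AFG : ∀ m : ℕ,
    (sS (P m) ≤ m) ∧
    (P m = P (m + 1) → fS (P m) ≤ m) ∧
    (P (m + 1) = P m + 1 → sS (P (m + 1)) - 1 ≤ m) := by
  intro m
  induction m using Nat.strong_induction_on with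
  | _ m ih =>
  rcases Nat.lt_or_ge m 4 with h4 | h4
  · have hP4 : P 4 = 1 := by
      have := P_four (b := 1) (by omega)
      rw [show 4 * 1 = 4 by omega, P_one] at this
      exact this
    have hs0 : sS 0 = 0 := rfl
    have hs1 : sS 1 = 1 := rfl
    have hs2 : sS 2 = 2 := rfl
    have hs3 : sS 3 = 6 := rfl
    have hf2 : fS 2 = 2 := rfl
    interval_cases m
    · exact ⟨by norm_num [P_zero, hs0], fun h => by norm_num [P_zero, P_one] at h,
        fun _ => by norm_num [P_one, hs1]⟩
    · exact ⟨by norm_num [P_one, hs1], fun h => by norm_num [P_one, P_two] at h,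
        fun _ => by norm_num [P_two, hs2]⟩
    · exact ⟨by norm_num [P_two, hs2], fun _ => by norm_num [P_two, hf2],
        fun h => by norm_num [P_two, P_three] at h⟩
    · exact ⟨by norm_num [P_three, hs2], fun h => by norm_num [P_three, hP4] at h,
        fun h => by norm_num [P_three, hP4] at h⟩
  obtain ⟨b, r, hr4, hm⟩ : ∃ b r, r < 4 ∧ m = 4 * b + r := ⟨m / 4, m % 4, by omega, by omega⟩
  have hb1 : 1 ≤ b := by omega
  obtain ⟨ihA, ihF, ihG⟩ := ih b (by omega)
  have hPb1pos : ¬ (P (b + 1) = 0) := fun h => by have := P_eq_zero h; omega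
  have lipu := P_lip_up b
  have lipd := P_lip_down b
  have hsp : ∀ K, 1 ≤ K → 1 ≤ sS K := fun K h => sq_pos h
  interval_cases r
  · -- r = 0
    simp only [Nat.add_zero] at hm
    subst hm
    have eq0 : P (4 * b) = P b := P_four hb1
    have eq1 : P (4 * b + 1) = P b + 1 := P_four_one b
    refine ⟨?_, ?_, ?_⟩
    · rw [eq0]; omega
    · rw [eq0, eq1]; omega
    · intro _
      rw [eq1]
      rcases Nat.eq_zero_or_pos (P b) with h0 | h0
      · exact absurd (P_eq_zero h0) (by omega)
      · have := sS_G1 (K := P b) h0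
        omega
  · -- r = 1
    subst hm
    have eq1 : P (4 * b + 1) = P b + 1 := P_four_one b
    have eq2 : P (4 * b + 1 + 1) = min (P b) (P (b + 1)) + 2 := by
      rw [show 4 * b + 1 + 1 = 4 * b + 2 by omega]; exact P_four_two b
    have hPbpos : 1 ≤ P b := by
      rcases Nat.eq_zero_or_pos (P b) with h0 | h0
      · exact absurd (P_eq_zero h0) (by omega)
      · exact h0
    have hG1 := sS_G1 (K := P b) hPbpos
    refine ⟨?_, ?_, ?_⟩
    · rw [eq1]; omega
    · -- equal pair: P b + 1 = min + 2  ⇒ descent at b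
      intro hyp
      rw [eq1] at hyp ⊢
      rw [eq2] at hyp
      have mc := min_choice (P b) (P (b + 1))
      have hdesc : P (b + 1) + 1 = P b := by omega
      -- use A(b) : sS (P b) ≤ b ; f (P b + 1) = 4 sS (P b) - 2
      have hf : fS (P b + 1) = 4 * sS (P b) - 2 := by
        have := fq_step (P b - 1)
        rwa [show P b - 1 + 2 = P b + 1 by omega, show P b - 1 + 1 = P b by omega] at this
      omega
    · -- ascent: min + 2 = P b + 2 ⇒ P(b+1) ≥ P b
      intro hyp
      rw [eq1] at hyp
      rw [eq2] at hyp ⊢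
      have mc := min_choice (P b) (P (b + 1))
      have hmin : min (P b) (P (b + 1)) = P b := by omega
      rw [hmin] at hyp ⊢
      rcases Nat.lt_or_ge (P (b + 1)) (P b + 1) with hc | hc
      · -- equal pair at b
        have hEq : P b = P (b + 1) := by omega
        have hFb := ihF hEq
        have hid : sS (P b + 2) = 4 * fS (P b) + 2 := fq_id (P b) hPbpos
        omega
      · -- ascent at b
        have hGb := ihG (by omega)
        have hG1' := sS_G1 (K := P b + 1) (by omega)
        rw [show P b + 1 + 1 = P b + 2 from rfl] at hG1'
        have hs1 := hsp (P b + 1) (by omega)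
        have : sS (P (b + 1)) - 1 ≤ b := hGb
        rw [show P (b + 1) = P b + 1 by omega] at this
        omega
  · -- r = 2
    subst hm
    have eq2 : P (4 * b + 2) = min (P b) (P (b + 1)) + 2 := P_four_two b
    have eq3 : P (4 * b + 2 + 1) = P (b + 1) + 1 := by
      rw [show 4 * b + 2 + 1 = 4 * b + 3 by omega]; exact P_four_three b
    have mc := min_choice (P b) (P (b + 1))
    refine ⟨?_, ?_, ?_⟩
    · rw [eq2]
      rcases Nat.lt_trichotomy (P b) (P (b + 1)) with hc | hc | hc
      · -- ascent at b : P(b+1) = P b + 1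
        have ha : P (b + 1) = P b + 1 := by omega
        have hGb := ihG ha
        rw [ha] at hGb ⊢
        have hmin : min (P b) (P b + 1) = P b := by omega
        rw [hmin]
        have hPbpos : 1 ≤ P b := by
          rcases Nat.eq_zero_or_pos (P b) with h0 | h0
          · exfalso; have := P_eq_zero h0; omega
          · exact h0
        have hG1' := sS_G1 (K := P b + 1) (by omega)
        rw [show P b + 1 + 1 = P b + 2 from rfl] at hG1'
        have hs1 := hsp (P b + 1) (by omega)
        omega
      · -- equal
        have hFb := ihF hc
        have hmin : min (P b) (P (b + 1)) = P b := by omega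
        rw [hmin]
        have hPbpos : 1 ≤ P b := by
          rcases Nat.eq_zero_or_pos (P b) with h0 | h0
          · exfalso; apply hPb1pos; omega
          · exact h0
        have hid : sS (P b + 2) = 4 * fS (P b) + 2 := fq_id (P b) hPbpos
        omega
      · -- descent : P b = P (b+1) + 1
        have hd : P b = P (b + 1) + 1 := by omega
        have hmin : min (P b) (P (b + 1)) = P (b + 1) := by omega
        rw [hmin]
        have hPbpos : 1 ≤ P b := by omega
        have hG1' := sS_G1 (K := P b) hPbpos
        rw [show P (b + 1) + 2 = P b + 1 by omega]
        omega
    · -- equal pair at m : min + 2 = P(b+1) + 1 ⇒ ascent at b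
      intro hyp
      rw [eq2] at hyp ⊢
      rw [eq3] at hyp
      have ha : P (b + 1) = P b + 1 := by omega
      have hGb := ihG ha
      have hmin : min (P b) (P (b + 1)) = P b := by omega
      rw [hmin]
      have hf : fS (P b + 2) = 4 * sS (P b + 1) - 2 := by
        have := fq_step (P b)
        rwa [] at this
      have hs1 := hsp (P b + 1) (by omega)
      rw [ha] at hGb
      omega
    · -- ascent at m : P(b+1)+1 = min + 3 : impossible
      intro hyp
      rw [eq2, eq3] at hyp
      omega
  · -- r = 3
    subst hm
    have eq3 : P (4 * b + 3) = P (b + 1) + 1 := P_four_three b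
    have eq4 : P (4 * b + 3 + 1) = P (b + 1) := by
      rw [show 4 * b + 3 + 1 = 4 * (b + 1) by omega]; exact P_four (by omega)
    obtain ⟨ihA1, _, _⟩ := ih (b + 1) (by omega)
    have hP1pos : 1 ≤ P (b + 1) := by omega
    have hG1' := sS_G1 (K := P (b + 1)) hP1pos
    refine ⟨?_, ?_, ?_⟩
    · rw [eq3]; omega
    · intro hyp; rw [eq3, eq4] at hyp; omega
    · intro hyp; rw [eq3, eq4] at hyp; omega

lemma P_step_real {x v : ℕ} (hx : 1 ≤ x) (h1 : P (x - 1) = v) (h2 : P x = v + 1) :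
    P (16 * x - 7) = v + 3 ∧ P (16 * x - 6) = v + 4 := by
  have e1 : 4 * x - 2 = 4 * (x - 1) + 2 := by omega
  have e2 : 4 * x - 1 = 4 * (x - 1) + 3 := by omega
  have hA : P (4 * x - 2) = v + 2 := by
    rw [e1, P_four_two, show x - 1 + 1 = x by omega, h1, h2, min_eq_left (by omega)]
  have hB : P (4 * x - 1) = v + 2 := by
    rw [e2, P_four_three, show x - 1 + 1 = x by omega, h2]
  have e3 : 16 * x - 7 = 4 * (4 * x - 2) + 1 := by omega
  have e4 : 16 * x - 6 = 4 * (4 * x - 2) + 2 := by omega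
  constructor
  · rw [e3, P_four_one, hA]
  · rw [e4, P_four_two, show 4 * x - 2 + 1 = 4 * x - 1 by omega, hA, hB, min_self]

lemma P_real : ∀ K, 1 ≤ K → P (sS K - 1) = K - 1 ∧ P (sS K) = K := by
  intro K
  induction K using Nat.strong_induction_on with
  | _ K ih =>
  intro hK
  match K, hK with
  | 1, _ =>
    have h : sS 1 = 1 := rfl
    rw [h]
    exact ⟨by norm_num [P_zero], by norm_num [P_one]⟩
  | 2, _ =>
    have h : sS 2 = 2 := rfl
    rw [h]
    exact ⟨by norm_num [P_one], by norm_num [P_two]⟩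
  | 3, _ =>
    have h : sS 3 = 6 := rfl
    rw [h]
    constructor
    · have := P_four_one 1
      norm_num at this
      norm_num [this, P_one]
    · have := P_four_two 1
      norm_num [P_one, P_two] at this
      norm_num [this]
  | (J+4), _ =>
    have hJ1 : 1 ≤ J + 1 := by omega
    have hx := sq_pos hJ1
    obtain ⟨r1, r2⟩ := ih (J + 1) (by omega) hJ1
    rw [show J + 1 - 1 = J from rfl] at r1
    have hstep := P_step_real hx r1 r2
    have hsK : sS (J + 4) = 16 * sS (J + 1) - 6 := by
      have := sq_step (K := J + 1) hJ1
      rwa [show J + 1 + 3 = J + 4 from rfl] at this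
    constructor
    · rw [hsK, show 16 * sS (J + 1) - 6 - 1 = 16 * sS (J + 1) - 7 by omega, hstep.1]
      omega
    · rw [hsK, hstep.2]

lemma spTM_eq (K : ℕ) : spTM K = sS K := by
  have hmem : P (sS K) = K := by
    rcases Nat.eq_zero_or_pos K with h | h
    · subst h
      have : sS 0 = 0 := rfl
      rw [this, P_zero]
    · exact (P_real K h).2
  have hset : {n | pplTM n = K} = {n | P n = K} := by
    ext n; simp [pplTM_eq_P]
  show sInf {n | pplTM n = K} = sS K
  rw [hset]
  apply le_antisymm
  · exact Nat.sInf_le (show sS K ∈ {n | P n = K} from hmem)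
  · apply le_csInf ⟨sS K, show sS K ∈ {n | P n = K} from hmem⟩
    intro n hn
    have h := (AFG n).1
    rw [Set.mem_setOf_eq] at hn
    rw [hn] at h
    exact h

lemma form2 : ∀ k, 5 * sS (3 * k + 2) = 8 * 16 ^ k + 2 := by
  intro k
  induction k with
  | zero => norm_num [show sS 2 = 2 from rfl]
  | succ k ihk =>
    have hstep : sS (3 * (k + 1) + 2) = 16 * sS (3 * k + 2) - 6 := by
      have := sq_step (K := 3 * k + 2) (by omega)
      rwa [show 3 * k + 2 + 3 = 3 * (k + 1) + 2 by ring] at this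
    have hpos : 1 ≤ sS (3 * k + 2) := sq_pos (by omega)
    have hp : (16 : ℕ) ^ (k + 1) = 16 * 16 ^ k := by ring
    rw [hstep]
    omega

lemma form0 : ∀ k, 5 * sS (3 * k + 3) = 28 * 16 ^ k + 2 := by
  intro k
  induction k with
  | zero => norm_num [show sS 3 = 6 from rfl]
  | succ k ihk =>
    have hstep : sS (3 * (k + 1) + 3) = 16 * sS (3 * k + 3) - 6 := by
      have := sq_step (K := 3 * k + 3) (by omega)
      rwa [show 3 * k + 3 + 3 = 3 * (k + 1) + 3 by ring] at this
    have hpos : 1 ≤ sS (3 * k + 3) := sq_pos (by omega)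
    have hp : (16 : ℕ) ^ (k + 1) = 16 * 16 ^ k := by ring
    rw [hstep]
    omega

lemma form1 : ∀ k, 5 * sS (3 * k + 4) = 48 * 16 ^ k + 2 := by
  intro k
  induction k with
  | zero =>
    have h4 : sS 4 = 10 := by norm_num [sS]
    norm_num [h4]
  | succ k ihk =>
    have hstep : sS (3 * (k + 1) + 4) = 16 * sS (3 * k + 4) - 6 := by
      have := sq_step (K := 3 * k + 4) (by omega)
      rwa [show 3 * k + 4 + 3 = 3 * (k + 1) + 4 by ring] at this
    have hpos : 1 ≤ sS (3 * k + 4) := sq_pos (by omega)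
    have hp : (16 : ℕ) ^ (k + 1) = 16 * 16 ^ k := by ring
    rw [hstep]
    omega

/-- In base 4, `SP_t(3k+2) = ((12)^k 2)₄` for `k ≥ 0`,
`SP_t(3k) = (1(12)^{k−1}2)₄` and `SP_t(3k+1) = (2(12)^{k−1}2)₄` for `k ≥ 1`;
equivalently `5·SP_t(3k+2) = 8·16^k + 2` for `k ≥ 0`, and
`5·SP_t(3k) = 28·16^{k−1} + 2`, `5·SP_t(3k+1) = 48·16^{k−1} + 2` for `k ≥ 1`. -/
theorem spTM_base_four :
    (∀ k : ℕ, 5 * spTM (3 * k + 2) = 8 * 16 ^ k + 2) ∧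
    (∀ k : ℕ, 1 ≤ k → 5 * spTM (3 * k) = 28 * 16 ^ (k - 1) + 2) ∧
    (∀ k : ℕ, 1 ≤ k → 5 * spTM (3 * k + 1) = 48 * 16 ^ (k - 1) + 2) := by
  refine ⟨?_, ?_, ?_⟩
  · intro k
    rw [spTM_eq]
    exact form2 k
  · intro k hk
    obtain ⟨j, rfl⟩ : ∃ j, k = j + 1 := ⟨k - 1, by omega⟩
    rw [spTM_eq, show 3 * (j + 1) = 3 * j + 3 by ring, show j + 1 - 1 = j by omega]
    exact form0 j
  · intro k hk
    obtain ⟨j, rfl⟩ : ∃ j, k = j + 1 := ⟨k - 1, by omega⟩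
    rw [spTM_eq, show 3 * (j + 1) + 1 = 3 * j + 4 by ring, show j + 1 - 1 = j by omega]
    exact form1 j
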